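/- Let q > 0, r > 0, and set λₖ⁺ = the unique λ ∈ [0, q) with λ = λₖ(λqr/(q−λ)), where λₖ(μ) is the k-th eigenvalue of the Robin Laplacian (non-increasing continuous in μ, λₖ(μ) → λₖ^D as μ → −∞ with λₖ^D → ∞ as k → ∞). Then the sequence (λₖ⁺) is non-decreasing and λₖ⁺ → q as k → ∞. -/

import Mathlib

open MeasureTheory

/-- `v ∈ H¹(Ω)`. -/
def MemH1 {n : ℕ} (F : Set (EuclideanSpace ℝ (Fin n)))
    (v : EuclideanSpace ℝ (Fin n) → ℝ) : Prop :=
  MemLp v 2 (volume.restrict F) ∧ MemLp (fun x => ‖fderiv ℝ v x‖) 2 (volume.restrict F)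

/-- Rayleigh quotient of the Robin form `η^μ[u,u] = ∫_Ω |∇u|² − μ ∫_Γ |u|² ds`. -/
noncomputable def robinRayleigh (m : ℕ) (Ω Γ : Set (EuclideanSpace ℝ (Fin (m+1))))
    (μ : ℝ) (u : EuclideanSpace ℝ (Fin (m+1)) → ℝ) : ℝ :=
  ((∫ x in Ω, ‖fderiv ℝ u x‖^2) - μ * ∫ x in Γ, (u x)^2 ∂(μH[(m : ℝ)])) / ∫ x in Ω, (u x)^2

/-- The `k`-th (counted from `0`, with multiplicity) min-max eigenvalue of the Robin
Laplacian `A^μ`: infimum over `(k+1)`-dimensional subspaces `L` of the form domain `Q`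
(representing `H¹(Ω)`) of the supremum of the Rayleigh quotient over `L \ {0}`. -/
noncomputable def robinEig (m : ℕ) (Ω Γ : Set (EuclideanSpace ℝ (Fin (m+1))))
    (Q : Submodule ℝ (EuclideanSpace ℝ (Fin (m+1)) → ℝ)) (μ : ℝ) (k : ℕ) : ℝ :=
  sInf {r : ℝ | ∃ L : Submodule ℝ (EuclideanSpace ℝ (Fin (m+1)) → ℝ), L ≤ Q ∧
    Module.finrank ℝ L = k + 1 ∧
    r = sSup {s : ℝ | ∃ u, u ∈ L ∧ u ≠ 0 ∧ s = robinRayleigh m Ω Γ μ u}}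

/-!
Write `φ(λ) = λqr/(q−λ)`, which is increasing on `[0, q)`, so `λₖ⁺` is a fixed point of
`λ ↦ λₖ(φ λ)`. If `λₗ⁺ < λₖ⁺` for some `k ≤ l`, then
`λₖ⁺ = λₖ(φ λₖ⁺) ≤ λₗ(φ λₖ⁺) ≤ λₗ(φ λₗ⁺) = λₗ⁺`, a contradiction. For convergence, fix `a < q`:
since `λₖ(φ a) → ∞`, eventually `λₖ(φ a) > q`, and then `λₖ⁺ ≤ a` would give
`λₖ⁺ = λₖ(φ λₖ⁺) ≥ λₖ(φ a) > q`.
-/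

open Filter Set Topology

lemma monotoneOn_mul_mul_div_sub {q r : ℝ} (hr : 0 ≤ r) :
    MonotoneOn (fun l => l * q * r / (q - l)) (Ico 0 q) := by
  rintro a ⟨ha, -⟩ b ⟨hb, hbq⟩ hab
  have hq : 0 ≤ q := hb.trans hbq.le
  exact div_le_div₀ (by positivity) (by gcongr) (by linarith) (by linarith)

section FixedPoints

variable {f : ℝ → ℕ → ℝ} {g : ℝ → ℝ} {x : ℕ → ℝ}

lemma monotone_of_map_fixedPoint {s : Set ℝ} (hf : ∀ k, Antitone (f · k))
    (hfk : ∀ μ, Monotone (f μ)) (hg : MonotoneOn g s) (hx : ∀ k, x k ∈ s)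
    (hfix : ∀ k, f (g (x k)) k = x k) : Monotone x := by
  intro k l hkl
  by_contra! hlt
  have hμ : g (x l) ≤ g (x k) := hg (hx l) (hx k) hlt.le
  have : x k ≤ x l :=
    calc x k = f (g (x k)) k := (hfix k).symm
      _ ≤ f (g (x k)) l := hfk _ hkl
      _ ≤ f (g (x l)) l := hf l hμ
      _ = x l := hfix l
  linarith

lemma tendsto_of_map_fixedPoint {p q : ℝ} (hf : ∀ k, Antitone (f · k))
    (hfinf : ∀ μ, Tendsto (f μ) atTop atTop) (hg : MonotoneOn g (Ico p q))
    (hx : ∀ k, x k ∈ Ico p q) (hfix : ∀ k, f (g (x k)) k = x k) :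
    Tendsto x atTop (𝓝 q) := by
  refine tendsto_order.2 ⟨fun a ha => ?_, fun b hb => .of_forall fun k => (hx k).2.trans hb⟩
  have ha' : max a p ∈ Ico p q := ⟨le_max_right _ _, max_lt ha ((hx 0).1.trans_lt (hx 0).2)⟩
  filter_upwards [(hfinf (g (max a p))).eventually_gt_atTop q] with k hk
  by_contra! hle
  have hμ : g (x k) ≤ g (max a p) := hg (hx k) ha' (hle.trans (le_max_left _ _))
  have : f (g (max a p)) k ≤ x k := (hf k hμ).trans_eq (hfix k)
  linarith [(hx k).2]

end FixedPoints

theorem stmt15_general (m : ℕ) (Ω Γ : Set (EuclideanSpace ℝ (Fin (m+1))))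
    (Q : Submodule ℝ (EuclideanSpace ℝ (Fin (m+1)) → ℝ))
    (q r : ℝ) (hr : 0 < r)
    (hanti : ∀ k, Antitone (fun μ => robinEig m Ω Γ Q μ k))
    (hmonok : ∀ k μ, robinEig m Ω Γ Q μ k ≤ robinEig m Ω Γ Q μ (k+1))
    (hkinf : ∀ μ, Filter.Tendsto (fun k => robinEig m Ω Γ Q μ k) Filter.atTop
      Filter.atTop)
    (lamp : ℕ → ℝ)
    (hlamp : ∀ k, lamp k ∈ Set.Ico 0 q ∧
      robinEig m Ω Γ Q (lamp k * q * r / (q - lamp k)) k = lamp k) :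
    Monotone lamp ∧ Filter.Tendsto lamp Filter.atTop (nhds q) := by
  have hφ := monotoneOn_mul_mul_div_sub (q := q) hr.le
  exact ⟨monotone_of_map_fixedPoint hanti (fun μ => monotone_nat_of_le_succ (hmonok · μ)) hφ
      (fun k => (hlamp k).1) (fun k => (hlamp k).2),
    tendsto_of_map_fixedPoint hanti hkinf hφ (fun k => (hlamp k).1) (fun k => (hlamp k).2)⟩

/-- Let `q, r > 0` and `λₖ⁺ ∈ [0,q)` be the unique solution of
`λ = λₖ(λqr/(q−λ))`, where `λₖ(μ)` is the `k`-th Robin eigenvalue (continuous and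
non-increasing in `μ`, non-decreasing in `k`, converging as `μ → −∞` to the Dirichlet
eigenvalue `λₖ^D` with `λₖ^D → ∞`, and `λₖ(μ) → ∞` as `k → ∞` for each fixed `μ`).
Then `(λₖ⁺)` is non-decreasing and `λₖ⁺ → q` as `k → ∞`. -/
theorem stmt15 (m : ℕ) (hm : 1 ≤ m) (Ω Γ : Set (EuclideanSpace ℝ (Fin (m+1))))
    (hΩo : IsOpen Ω) (hΩb : Bornology.IsBounded Ω) (hΩc : IsConnected Ω)
    (hΓ : Γ ⊆ frontier Ω) (hΓpos : μH[(m : ℝ)] Γ ≠ 0)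
    (Q : Submodule ℝ (EuclideanSpace ℝ (Fin (m+1)) → ℝ))
    (hQ : ∀ u ∈ Q, MemH1 Ω u)
    (q r : ℝ) (hq : 0 < q) (hr : 0 < r)
    (hcont : ∀ k, Continuous (fun μ => robinEig m Ω Γ Q μ k))
    (hanti : ∀ k, Antitone (fun μ => robinEig m Ω Γ Q μ k))
    (hmonok : ∀ k μ, robinEig m Ω Γ Q μ k ≤ robinEig m Ω Γ Q μ (k+1))
    (lamD : ℕ → ℝ)
    (hDlim : ∀ k, Filter.Tendsto (fun μ => robinEig m Ω Γ Q μ k) Filter.atBot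
      (nhds (lamD k)))
    (hDinf : Filter.Tendsto lamD Filter.atTop Filter.atTop)
    (hkinf : ∀ μ, Filter.Tendsto (fun k => robinEig m Ω Γ Q μ k) Filter.atTop
      Filter.atTop)
    (lamp : ℕ → ℝ)
    (hlamp : ∀ k, lamp k ∈ Set.Ico 0 q ∧
      robinEig m Ω Γ Q (lamp k * q * r / (q - lamp k)) k = lamp k)
    (huniq : ∀ k l, l ∈ Set.Ico 0 q →
      robinEig m Ω Γ Q (l * q * r / (q - l)) k = l → l = lamp k) :
    Monotone lamp ∧ Filter.Tendsto lamp Filter.atTop (nhds q) :=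
  stmt15_general m Ω Γ Q q r hr hanti hmonok hkinf lamp hlamp
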